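/- Let K ⊆ ℝ^n be a centrally symmetric convex body of volume 1 and 0 < δ < 1/e. Then M_δ(K) ⊆ e · Z_{log(1/δ)}(K), where Z_p(K) is the L_p centroid body of K. -/

import Mathlib

open MeasureTheory Metric Set
open scoped RealInnerProductSpace ENNReal Topology Pointwise

noncomputable def metronoid {n : ℕ} (μ : Measure (EuclideanSpace ℝ (Fin n))) :
    Set (EuclideanSpace ℝ (Fin n)) :=
  {z | ∃ f : EuclideanSpace ℝ (Fin n) → ℝ,
    (∀ y, 0 ≤ f y ∧ f y ≤ 1) ∧ Integrable f μ ∧ (∫ y, f y ∂μ) = 1 ∧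
    Integrable (fun y => f y • y) μ ∧ z = ∫ y, f y • y ∂μ}

/-- The Ulam floating body `M_δ(K)`. -/
noncomputable def ulam {n : ℕ} (K : Set (EuclideanSpace ℝ (Fin n))) (δ : ℝ) :
    Set (EuclideanSpace ℝ (Fin n)) :=
  metronoid ((volume.restrict K).withDensity fun _ => ENNReal.ofReal (1 / δ))

/-- The `L_p` centroid body `Z_p(K)` of a body of volume `1`: the convex body with
support function `h(θ) = (∫_K |⟨x,θ⟩|^p dx)^{1/p}`. -/
noncomputable def centroidBody {n : ℕ} (p : ℝ) (K : Set (EuclideanSpace ℝ (Fin n))) :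
    Set (EuclideanSpace ℝ (Fin n)) :=
  {x | ∀ θ : EuclideanSpace ℝ (Fin n), ⟪x, θ⟫ ≤ (∫ y in K, |⟪y, θ⟫| ^ p) ^ (1 / p)}

/-!
For `z = ∫ f y • y ∂ν` in the metronoid of a finite measure `ν` (so `0 ≤ f ≤ 1`, `∫ f ∂ν = 1`),
Hölder's inequality gives `⟪z, θ⟫ ≤ ‖f‖_q ‖⟪·, θ⟫‖_p`, and `‖f‖_q ≤ (∫ f ∂ν) ^ (1/q) = 1` because
`f ^ q ≤ f`. Hence the metronoid of `ν` lies in the `L_p` centroid body of `ν` for every `p > 1`.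
The Ulam floating body is the metronoid of `ν = δ⁻¹ • vol|_K`, whose `p`-th moments are `δ⁻¹` times
those of `K`; for `p = log (1/δ)` the resulting factor `δ^(-1/p)` is exactly `e`.
-/

open Real

theorem Continuous.memLp_restrict_of_isCompact {X E : Type*} [TopologicalSpace X]
    [MeasurableSpace X] [OpensMeasurableSpace X] [T2Space X] [NormedAddCommGroup E]
    [SecondCountableTopologyEither X E]
    {μ : Measure X} [IsFiniteMeasureOnCompacts μ] {K : Set X} (hK : IsCompact K) {g : X → E}
    (hg : Continuous g) (p : ℝ≥0∞) : MemLp g p (μ.restrict K) := by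
  have : IsFiniteMeasure (μ.restrict K) := isFiniteMeasure_restrict.2 hK.measure_lt_top.ne
  obtain ⟨C, hC⟩ := hK.exists_bound_of_continuousOn hg.continuousOn
  exact MemLp.of_bound hg.aestronglyMeasurable C (ae_restrict_of_forall_mem hK.measurableSet hC)

section Holder

variable {α : Type*} [MeasurableSpace α] {μ : Measure α} {f : α → ℝ}

theorem integral_rpow_le_integral_of_mem_Icc (hf : ∀ y, f y ∈ Icc 0 1)
    (hfi : Integrable f μ) {q : ℝ} (hq : 1 ≤ q) : ∫ y, f y ^ q ∂μ ≤ ∫ y, f y ∂μ :=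
  integral_mono_of_nonneg (f := fun y => f y ^ q) (ae_of_all _ fun y => rpow_nonneg (hf y).1 q)
    hfi (ae_of_all _ fun y => rpow_le_self_of_le_one (hf y).1 (hf y).2 hq)

theorem integral_mul_le_integral_rpow_mul_of_mem_Icc [IsFiniteMeasure μ] {p q : ℝ}
    (hpq : p.HolderConjugate q) (hf : ∀ y, f y ∈ Icc 0 1) (hfi : Integrable f μ)
    {g : α → ℝ} (hg : 0 ≤ g) (hgp : MemLp g (ENNReal.ofReal p) μ) :
    ∫ y, f y * g y ∂μ ≤ (∫ y, f y ∂μ) ^ (1 / q) * (∫ y, g y ^ p ∂μ) ^ (1 / p) := by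
  have hfq : MemLp f (ENNReal.ofReal q) μ :=
    MemLp.of_bound hfi.aestronglyMeasurable 1 (ae_of_all _ fun y => by
      rw [Real.norm_of_nonneg (hf y).1]; exact (hf y).2)
  calc ∫ y, f y * g y ∂μ
      ≤ (∫ y, f y ^ q ∂μ) ^ (1 / q) * (∫ y, g y ^ p ∂μ) ^ (1 / p) :=
        integral_mul_le_Lp_mul_Lq_of_nonneg hpq.symm (ae_of_all _ fun y => (hf y).1)
          (ae_of_all _ hg) hfq hgp
    _ ≤ (∫ y, f y ∂μ) ^ (1 / q) * (∫ y, g y ^ p ∂μ) ^ (1 / p) :=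
        mul_le_mul_of_nonneg_right (rpow_le_rpow (integral_nonneg fun y => rpow_nonneg (hf y).1 q)
          (integral_rpow_le_integral_of_mem_Icc hf hfi hpq.symm.lt.le) hpq.symm.one_div_nonneg)
          (rpow_nonneg (integral_nonneg fun y => rpow_nonneg (hg y) p) _)

end Holder

theorem inner_le_of_mem_metronoid {n : ℕ} {ν : Measure (EuclideanSpace ℝ (Fin n))}
    [IsFiniteMeasure ν] {p : ℝ} (hp : 1 < p) {z θ : EuclideanSpace ℝ (Fin n)}
    (hz : z ∈ metronoid ν) (hθ : MemLp (fun y => ⟪y, θ⟫) (ENNReal.ofReal p) ν) :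
    ⟪z, θ⟫ ≤ (∫ y, |⟪y, θ⟫| ^ p ∂ν) ^ (1 / p) := by
  obtain ⟨f, hf, hfi, hf_one, hfyi, rfl⟩ := hz
  have hfθi : Integrable (fun y => f y * ⟪y, θ⟫) ν := by
    simpa only [real_inner_smul_left] using hfyi.inner_const (𝕜 := ℝ) θ
  have hf_absθi : Integrable (fun y => f y * |⟪y, θ⟫|) ν :=
    hfθi.abs.congr (ae_of_all _ fun y => by simp only [abs_mul, abs_of_nonneg (hf y).1])
  calc ⟪∫ y, f y • y ∂ν, θ⟫ = ∫ y, f y * ⟪y, θ⟫ ∂ν := by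
        rw [real_inner_comm, ← integral_inner (𝕜 := ℝ) hfyi θ]
        simp only [real_inner_smul_right, real_inner_comm θ]
    _ ≤ ∫ y, f y * |⟪y, θ⟫| ∂ν :=
        integral_mono hfθi hf_absθi fun y => mul_le_mul_of_nonneg_left (le_abs_self _) (hf y).1
    _ ≤ (∫ y, f y ∂ν) ^ (1 / p.conjExponent) * (∫ y, |⟪y, θ⟫| ^ p ∂ν) ^ (1 / p) :=
        integral_mul_le_integral_rpow_mul_of_mem_Icc (.conjExponent hp) hf hfi
          (fun y => abs_nonneg _) hθ.abs
    _ = (∫ y, |⟪y, θ⟫| ^ p ∂ν) ^ (1 / p) := by rw [hf_one, one_rpow, one_mul]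

theorem stmt8_general (n : ℕ) (K : Set (EuclideanSpace ℝ (Fin n)))
    (hK : IsCompact K)
    (δ : ℝ) (hδ0 : 0 < δ) (hδ1 : δ < 1 / Real.exp 1) :
    ulam K δ ⊆ Real.exp 1 • centroidBody (Real.log (1 / δ)) K := by
  have he_lt : exp 1 < 1 / δ := by rwa [lt_one_div (exp_pos 1) hδ0]
  have hp : 1 < log (1 / δ) := (lt_log_iff_exp_lt (by positivity)).2 he_lt
  have : IsFiniteMeasure (volume.restrict K) := isFiniteMeasure_restrict.2 hK.measure_lt_top.ne
  have : IsFiniteMeasure (ENNReal.ofReal (1 / δ) • volume.restrict K) :=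
    Measure.smul_finite _ ENNReal.ofReal_ne_top
  intro z hz
  rw [ulam, withDensity_const] at hz
  rw [mem_smul_set_iff_inv_smul_mem₀ (exp_pos 1).ne']
  intro θ
  have hθ := inner_le_of_mem_metronoid (θ := θ) hp hz
    (((continuous_id.inner continuous_const).memLp_restrict_of_isCompact hK _).smul_measure
      ENNReal.ofReal_ne_top)
  have hscale : (1 / δ) ^ (1 / log (1 / δ)) = exp 1 :=
    one_div (log (1 / δ)) ▸
      rpow_inv_log (by positivity) (one_lt_exp_iff.2 one_pos |>.trans he_lt).ne'
  rw [integral_smul_measure, ENNReal.toReal_ofReal (by positivity), smul_eq_mul,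
    mul_rpow (by positivity) (integral_nonneg fun y => by positivity), hscale] at hθ
  rwa [real_inner_smul_left, inv_mul_le_iff₀ (exp_pos 1)]

/-- For a symmetric convex body of volume `1` and `0 < δ < 1/e`:
`M_δ(K) ⊆ e · Z_{log(1/δ)}(K)`. -/
theorem stmt8 (n : ℕ) (K : Set (EuclideanSpace ℝ (Fin n)))
    (hK : IsCompact K) (hKc : Convex ℝ K) (hKi : (interior K).Nonempty)
    (hsymm : K = -K) (hvol : volume K = 1)
    (δ : ℝ) (hδ0 : 0 < δ) (hδ1 : δ < 1 / Real.exp 1) :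
    ulam K δ ⊆ Real.exp 1 • centroidBody (Real.log (1 / δ)) K :=
  stmt8_general n K hK δ hδ0 hδ1
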